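/- arXiv:2403.02345 — 2 statements merged into one kernel-verified Lean document; each statement's English description precedes it below -/
import Mathlib

section
/- For every real a ∈ (1, 3/2], A₁ = 0, and for every a ∈ (3/2, 2], A₁ = 16(a-1)(1 - a/√(a² + 2a - 3)). In both cases A₁ ≥ 0. -/
/-!
Put `v = √(a² + 2a - 3)` and `s = √((a + 2)² + 4/(a - 1))`. Then `a v = (a - 1) s`, and the
numbers `a₁, a₂` are built so that `(a₂ + 1)/a₂ = (a + v)²`, `(a₁ - 1)/a₁ = (a - v)²` and
`a₁ + a₂ = s/4`. Hence `A₁ = 16(a - 1)(1 - min(a, v)/v)`, and `v ≤ a` exactly when `a ≤ 3/2`.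
-/

open Real

section

variable {a s v : ℝ}

theorem add_one_div_eq_sq (hs : (a - 1) * s ^ 2 = (a - 1) * (a + 2) ^ 2 + 4)
    (hv : v ^ 2 = a ^ 2 + 2 * a - 3) (hsv : a * v = (a - 1) * s) :
    ((s - (a + 2)) / 8 + 1) / ((s - (a + 2)) / 8) = (a + v) ^ 2 := by
  have hinv : (s - (a + 2)) / 8 * (2 * (a - 1) * (s + (a + 2))) = 1 := by
    linear_combination (1 / 4) * hs
  rw [div_eq_iff (left_ne_zero_of_mul_eq_one hinv)]
  linear_combination -hinv - (s - (a + 2)) / 8 * hv - (s - (a + 2)) / 4 * hsv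

theorem sub_one_div_eq_sq (hs : (a - 1) * s ^ 2 = (a - 1) * (a + 2) ^ 2 + 4)
    (hv : v ^ 2 = a ^ 2 + 2 * a - 3) (hsv : a * v = (a - 1) * s) :
    ((s + a + 2) / 8 - 1) / ((s + a + 2) / 8) = (a - v) ^ 2 := by
  have hinv : (s + a + 2) / 8 * (2 * (a - 1) * (s - (a + 2))) = 1 := by
    linear_combination (1 / 4) * hs
  rw [div_eq_iff (left_ne_zero_of_mul_eq_one hinv)]
  linear_combination hinv - (s + a + 2) / 8 * hv + (s + a + 2) / 4 * hsv

theorem add_sub_abs_sub_eq_two_mul_min (x y : ℝ) : x + y - |x - y| = 2 * min x y := by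
  rcases le_total x y with h | h
  · rw [abs_of_nonpos (sub_nonpos.2 h), min_eq_left h]; ring
  · rw [abs_of_nonneg (sub_nonneg.2 h), min_eq_right h]; ring

theorem sixteen_mul_sub_eq_mul_one_sub_min_div (ha : 1 < a) (hv0 : 0 < v)
    (hs : (a - 1) * s ^ 2 = (a - 1) * (a + 2) ^ 2 + 4)
    (hv : v ^ 2 = a ^ 2 + 2 * a - 3) (hsv : a * v = (a - 1) * s) :
    16 * (a - 1) - (2 * a / ((s + a + 2) / 8 + (s - (a + 2)) / 8)) *
        (√(((s - (a + 2)) / 8 + 1) / ((s - (a + 2)) / 8)) -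
          √(((s + a + 2) / 8 - 1) / ((s + a + 2) / 8))) =
      16 * (a - 1) * (1 - min a v / v) := by
  have hs0 : 0 < s := pos_of_mul_pos_right (hsv ▸ mul_pos (by linarith) hv0) (by linarith)
  have hsum : (s + a + 2) / 8 + (s - (a + 2)) / 8 = s / 4 := by ring
  rw [hsum, add_one_div_eq_sq hs hv hsv, sub_one_div_eq_sq hs hv hsv,
    sqrt_sq (by linarith), sqrt_sq_eq_abs, add_sub_abs_sub_eq_two_mul_min]
  field_simp
  linear_combination (-16 * min a v) * hsv

theorem sub_one_mul_sq_sqrt (ha : 1 < a) :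
    (a - 1) * √((a + 2) ^ 2 + 4 / (a - 1)) ^ 2 = (a - 1) * (a + 2) ^ 2 + 4 := by
  have ha1 : 0 < a - 1 := by linarith
  rw [sq_sqrt (by positivity)]
  field_simp

theorem mul_sqrt_eq_sub_one_mul_sqrt (ha : 1 < a) :
    a * √(a ^ 2 + 2 * a - 3) = (a - 1) * √((a + 2) ^ 2 + 4 / (a - 1)) := by
  rw [← pow_left_inj₀ (by positivity) (mul_nonneg (by linarith) (sqrt_nonneg _)) two_ne_zero,
    mul_pow, mul_pow, sq_sqrt (by nlinarith), pow_two (a - 1), mul_assoc,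
    sub_one_mul_sq_sqrt ha]
  ring

end

theorem stmt_10 (a : ℝ) (ha : a ∈ Set.Ioc (1:ℝ) 2)
    (a₁ a₂ A₁ : ℝ)
    (ha₁ : a₁ = (Real.sqrt ((a+2)^2 + 4/(a-1)) + a + 2)/8)
    (ha₂ : a₂ = (Real.sqrt ((a+2)^2 + 4/(a-1)) - (a+2))/8)
    (hA₁ : A₁ = 16*(a-1) - (2*a/(a₁+a₂)) * (Real.sqrt ((a₂+1)/a₂) - Real.sqrt ((a₁-1)/a₁))) :
    (a ≤ 3/2 → A₁ = 0) ∧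
      (3/2 < a → A₁ = 16*(a-1)*(1 - a / Real.sqrt (a^2 + 2*a - 3))) ∧
      0 ≤ A₁ := by
  have ha1 : 1 < a := ha.1
  have hv0 : 0 < √(a ^ 2 + 2 * a - 3) := sqrt_pos.2 (by nlinarith)
  subst ha₁ ha₂ hA₁
  rw [sixteen_mul_sub_eq_mul_one_sub_min_div ha1 hv0 (sub_one_mul_sq_sqrt ha1)
    (sq_sqrt (by nlinarith)) (mul_sqrt_eq_sub_one_mul_sqrt ha1)]
  refine ⟨fun h => ?_, fun h => ?_, ?_⟩
  · rw [min_eq_right ((sqrt_le_left (by linarith)).2 (by linarith)), div_self hv0.ne']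
    ring
  · rw [min_eq_left ((lt_sqrt (by linarith)).2 (by linarith)).le]
  · exact mul_nonneg (by linarith) (sub_nonneg.2 ((div_le_one hv0).2 (min_le_right _ _)))
end

section
/- For every real b ≥ 1, ∫₀¹ (1/(b - x))·√((1-x)/x) dx = π·(1 - √(1 - 1/b)). -/
open Real Filter Set MeasureTheory intervalIntegral Topology Function

/-!
With `t = √((1 - x) / x)`, i.e. `x = 1 / (1 + t ^ 2)`, the integrand becomes a rational function
of `t`, and `2 (c arctan (t / c) - arctan t)` with `c = √(1 - 1 / b)` is a primitive on `(0, 1)`.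
It tends to `π (c - 1)` as `x → 0⁺` and to `0` as `x → 1⁻`. The integrand is nonnegative, so
these finite limits also make it integrable and the improper fundamental theorem of calculus
applies.
-/

theorem intervalIntegrable_deriv_of_nonneg_of_tendsto {f f' : ℝ → ℝ} {a b fa fb : ℝ}
    (hab : a < b) (hderiv : ∀ x ∈ Ioo a b, HasDerivAt f (f' x) x)
    (hpos : ∀ x ∈ Ioo a b, 0 ≤ f' x) (ha : Tendsto f (𝓝[>] a) (𝓝 fa))
    (hb : Tendsto f (𝓝[<] b) (𝓝 fb)) : IntervalIntegrable f' volume a b := by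
  set F : ℝ → ℝ := update (update f a fa) b fb
  have hFf : EqOn F f (Ioo a b) := fun x hx ↦ by
    simp only [F, update_of_ne hx.2.ne, update_of_ne hx.1.ne']
  have hFderiv : ∀ x ∈ Ioo a b, HasDerivAt F (f' x) x := fun x hx ↦
    (hderiv x hx).congr_of_eventuallyEq (eventuallyEq_of_mem (Ioo_mem_nhds hx.1 hx.2) hFf)
  have hcont : ContinuousOn F (Icc a b) := by
    rw [continuousOn_update_iff, continuousOn_update_iff, Icc_sdiff_right, Ico_sdiff_left]
    refine ⟨⟨fun x hx ↦ (hderiv x hx).continuousAt.continuousWithinAt, fun _ ↦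
      ha.mono_left (nhdsWithin_mono _ Ioo_subset_Ioi_self)⟩, fun _ ↦ ?_⟩
    refine (hb.congr' ?_).mono_left (nhdsWithin_mono _ Ico_subset_Iio_self)
    filter_upwards [Ioo_mem_nhdsLT hab] with x hx using (update_of_ne hx.1.ne' _ _).symm
  exact (intervalIntegrable_iff_integrableOn_Ioc_of_le hab.le).2
    (integrableOn_deriv_of_nonneg hcont hFderiv hpos)

theorem hasDerivAt_sqrt_one_sub_div {x : ℝ} (hx0 : x ≠ 0) (hx1 : x ≠ 1) :
    HasDerivAt (fun y ↦ √((1 - y) / y)) (-(x ^ 2)⁻¹ / (2 * √((1 - x) / x))) x := by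
  have h : HasDerivAt (fun y ↦ (1 - y) / y) (-(x ^ 2)⁻¹) x := by
    refine (((hasDerivAt_id' x).const_sub 1).div (hasDerivAt_id' x) hx0).congr_deriv ?_
    field_simp
    ring
  exact h.sqrt (div_ne_zero (sub_ne_zero.2 hx1.symm) hx0)

theorem HasDerivAt.mul_arctan_div {u : ℝ → ℝ} {u' x : ℝ} (c : ℝ) (hu : HasDerivAt u u' x) :
    HasDerivAt (fun y ↦ c * Real.arctan (u y / c)) (c ^ 2 / (c ^ 2 + u x ^ 2) * u') x := by
  rcases eq_or_ne c 0 with rfl | hc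
  · simpa using hasDerivAt_const x (0 : ℝ)
  refine ((HasDerivAt.arctan (hu.div_const c)).const_mul c).congr_deriv ?_
  field_simp

noncomputable def arctanPrimitive (c x : ℝ) : ℝ :=
  2 * (c * arctan (√((1 - x) / x) / c) - arctan √((1 - x) / x))

theorem hasDerivAt_arctanPrimitive {b c x : ℝ} (hb : b ≠ 0) (hc : c ^ 2 = 1 - 1 / b)
    (hx0 : 0 < x) (hx1 : x < 1) (hxb : x ≠ b) :
    HasDerivAt (arctanPrimitive c) (1 / (b - x) * √((1 - x) / x)) x := by
  have ht' := hasDerivAt_sqrt_one_sub_div hx0.ne' hx1.ne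
  refine (((HasDerivAt.mul_arctan_div c ht').sub (HasDerivAt.arctan ht')).const_mul 2)
    |>.congr_deriv ?_
  have hu : 0 < (1 - x) / x := div_pos (by linarith) hx0
  set t := √((1 - x) / x)
  have ht : t ≠ 0 := (sqrt_pos.2 hu).ne'
  have ht2 : t ^ 2 = (1 - x) / x := sq_sqrt hu.le
  have hbx : b - x ≠ 0 := sub_ne_zero.2 hxb.symm
  have e1 : 1 + t ^ 2 = 1 / x := by rw [ht2]; field_simp; ring
  have e2 : c ^ 2 + t ^ 2 = (b - x) / (b * x) := by rw [hc, ht2]; field_simp; ring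
  rw [e1, e2]
  field_simp
  rw [hc, ht2]
  field_simp
  ring

theorem tendsto_sqrt_one_sub_div_nhdsGT_zero :
    Tendsto (fun x : ℝ ↦ √((1 - x) / x)) (𝓝[>] 0) atTop := by
  refine tendsto_sqrt_atTop.comp ((tendsto_atTop_add_const_right _ (-1)
    tendsto_inv_nhdsGT_zero).congr' ?_)
  filter_upwards [self_mem_nhdsWithin] with x hx
  rw [sub_div, div_self (ne_of_gt hx), one_div]
  ring

theorem tendsto_arctanPrimitive_nhdsGT_zero {c : ℝ} (hc : 0 ≤ c) :
    Tendsto (arctanPrimitive c) (𝓝[>] 0) (𝓝 (π * (c - 1))) := by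
  have harctan := (tendsto_arctan_atTop.mono_right nhdsWithin_le_nhds).comp
    tendsto_sqrt_one_sub_div_nhdsGT_zero
  have hc_arctan : Tendsto (fun x : ℝ ↦ c * arctan (√((1 - x) / x) / c)) (𝓝[>] 0)
      (𝓝 (c * (π / 2))) := by
    rcases hc.eq_or_lt with rfl | hc
    · simp
    exact ((tendsto_arctan_atTop.mono_right nhdsWithin_le_nhds).comp
      (tendsto_sqrt_one_sub_div_nhdsGT_zero.atTop_div_const hc)).const_mul c
  rw [show π * (c - 1) = 2 * (c * (π / 2) - π / 2) by ring]
  exact (hc_arctan.sub harctan).const_mul 2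

theorem tendsto_arctanPrimitive_nhdsLT_one (c : ℝ) :
    Tendsto (arctanPrimitive c) (𝓝[<] 1) (𝓝 0) := by
  have hcont : ContinuousAt (arctanPrimitive c) 1 := by
    unfold arctanPrimitive
    fun_prop (disch := norm_num)
  simpa [arctanPrimitive] using hcont.tendsto.mono_left nhdsWithin_le_nhds

open Real in
theorem stmt_15 (b : ℝ) (hb : 1 ≤ b) :
    ∫ x in (0:ℝ)..1, (1/(b - x)) * Real.sqrt ((1-x)/x) =
      π * (1 - Real.sqrt (1 - 1/b)) := by
  set c := √(1 - 1 / b)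
  have hc : c ^ 2 = 1 - 1 / b := sq_sqrt (by rw [sub_nonneg, div_le_one (by linarith)]; exact hb)
  have hderiv : ∀ x ∈ Ioo (0 : ℝ) 1,
      HasDerivAt (arctanPrimitive c) (1 / (b - x) * √((1 - x) / x)) x := fun x hx ↦
    hasDerivAt_arctanPrimitive (zero_lt_one.trans_le hb).ne' hc hx.1 hx.2 (hx.2.trans_le hb).ne
  have hpos : ∀ x ∈ Ioo (0 : ℝ) 1, 0 ≤ 1 / (b - x) * √((1 - x) / x) := fun x hx ↦
    mul_nonneg (one_div_nonneg.2 (by linarith [hx.2])) (sqrt_nonneg _)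
  have h0 := tendsto_arctanPrimitive_nhdsGT_zero (sqrt_nonneg (1 - 1 / b))
  have h1 := tendsto_arctanPrimitive_nhdsLT_one c
  rw [integral_eq_sub_of_hasDerivAt_of_tendsto one_pos hderiv
    (intervalIntegrable_deriv_of_nonneg_of_tendsto one_pos hderiv hpos h0 h1) h0 h1]
  ring
end
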